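/- Let G be the unit disk graph on a finite set of points P ⊆ ℝ², let e ∈ E be an edge of G, and let ρ > 1 be a real number. Then there exists an integer r ≥ 1 such that the minimum cardinality of an ev-dominating set of the edge-induced subgraph G[N_e^{r+4}[e]] is at most ρ times the minimum cardinality of an ev-dominating set of the edge-induced subgraph G[N_e^{r}[e]], i.e., |EVD_opt(N_e^{r+4}[e])| ≤ ρ·|EVD_opt(N_e^{r}[e])|. -/

import Mathlib

namespace EVDS

/-- Two edges (as unordered pairs) share a common endpoint. -/
def Shares {V : Type*} (e f : Sym2 V) : Prop := ∃ w, w ∈ e ∧ w ∈ f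

noncomputable instance {V : Type*} (e f : Sym2 V) : Decidable (Shares e f) :=
  Classical.dec _

/-- A vertex `v` is edge-vertex (ev-)dominated by the edge `e` within the edge set `A`. -/
def EvDomBy {V : Type*} (A : Finset (Sym2 V)) (e : Sym2 V) (v : V) : Prop :=
  v ∈ e ∨ ∃ f ∈ A, Shares e f ∧ v ∈ f

/-- `S` is an ev-dominating set of the edge-induced subgraph `G[A]`. -/
def IsEVDSOn {V : Type*} (A S : Finset (Sym2 V)) : Prop :=
  S ⊆ A ∧ ∀ v : V, (∃ f ∈ A, v ∈ f) → ∃ e ∈ S, EvDomBy A e v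

/-- The minimum cardinality of an ev-dominating set of the edge-induced subgraph `G[A]`. -/
noncomputable def evdOpt {V : Type*} (A : Finset (Sym2 V)) : ℕ :=
  sInf {n | ∃ S : Finset (Sym2 V), IsEVDSOn A S ∧ S.card = n}

/-- The closed edge neighborhood `N_e[f]` of an edge `f` within the edge set `E`. -/
noncomputable def closedEdgeNbhd {V : Type*} [DecidableEq V]
    (E : Finset (Sym2 V)) (f : Sym2 V) : Finset (Sym2 V) :=
  insert f (E.filter fun g => Shares f g)

/-- The iterated closed edge neighborhood `N_e^r[e]` within the edge set `E`. -/
noncomputable def edgeNbhdIter {V : Type*} [DecidableEq V]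
    (E : Finset (Sym2 V)) (e : Sym2 V) : ℕ → Finset (Sym2 V)
  | 0 => {e}
  | r + 1 => (edgeNbhdIter E e r).biUnion (closedEdgeNbhd E)

/-- The unit disk graph on a finite set of points `P ⊆ ℝ²`: two distinct points are
adjacent iff their Euclidean distance is at most 1. -/
def unitDiskGraph (P : Finset (EuclideanSpace ℝ (Fin 2))) :
    SimpleGraph {p // p ∈ P} where
  Adj p q := p ≠ q ∧ dist (p : EuclideanSpace ℝ (Fin 2)) (q : EuclideanSpace ℝ (Fin 2)) ≤ 1
  symm := by
    constructor
    intro p q h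
    exact ⟨h.1.symm, by rw [dist_comm]; exact h.2⟩
  loopless := by
    constructor
    intro p h
    exact h.1 rfl

noncomputable instance (P : Finset (EuclideanSpace ℝ (Fin 2))) :
    DecidableRel (unitDiskGraph P).Adj := fun _ _ => Classical.dec _

noncomputable instance : DecidableEq (EuclideanSpace ℝ (Fin 2)) :=
  Classical.decEq _

lemma isEVDSOn_self {V : Type*} (A : Finset (Sym2 V)) : IsEVDSOn A A :=
  ⟨subset_refl A, fun v ⟨f, hf, hv⟩ => ⟨f, hf, Or.inl hv⟩⟩

lemma evdOpt_le_card {V : Type*} (A : Finset (Sym2 V)) : evdOpt A ≤ A.card :=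
  Nat.sInf_le ⟨A, isEVDSOn_self A, rfl⟩

lemma one_le_evdOpt {V : Type*} {A : Finset (Sym2 V)} (h : A.Nonempty) :
    1 ≤ evdOpt A := by
  obtain ⟨f, hf⟩ := h
  obtain ⟨S, hS, hcard⟩ :=
    Nat.sInf_mem (s := {n | ∃ S : Finset (Sym2 V), IsEVDSOn A S ∧ S.card = n})
      ⟨A.card, A, isEVDSOn_self A, rfl⟩
  obtain ⟨g, hg, -⟩ := hS.2 f.out.1 ⟨f, hf, Sym2.out_fst_mem f⟩
  rw [evdOpt, ← hcard]
  exact Finset.card_pos.mpr ⟨g, hg⟩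

lemma edgeNbhdIter_subset {V : Type*} [DecidableEq V]
    {E : Finset (Sym2 V)} {e : Sym2 V} (he : e ∈ E) :
    ∀ r, edgeNbhdIter E e r ⊆ E := by
  intro r
  induction r with
  | zero => simpa [edgeNbhdIter] using he
  | succ r ih =>
    refine Finset.biUnion_subset.mpr fun f hf => ?_
    intro g hg
    rcases Finset.mem_insert.mp hg with h | h
    · exact h ▸ ih hf
    · exact (Finset.mem_filter.mp h).1

lemma mem_edgeNbhdIter {V : Type*} [DecidableEq V]
    (E : Finset (Sym2 V)) (e : Sym2 V) : ∀ r, e ∈ edgeNbhdIter E e r := by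
  intro r
  induction r with
  | zero => simp [edgeNbhdIter]
  | succ r ih =>
    exact Finset.mem_biUnion.mpr ⟨e, ih, Finset.mem_insert_self _ _⟩

/-- Let `G` be the unit disk graph on a finite set of points
`P ⊆ ℝ²`, `e` an edge of `G` and `ρ > 1`. Then there is an integer `r ≥ 1` with
`|EVD_opt(N_e^{r+4}[e])| ≤ ρ·|EVD_opt(N_e^{r}[e])|`. -/
theorem exists_radius_evdOpt_le {P : Finset (EuclideanSpace ℝ (Fin 2))}
    (e : Sym2 {p // p ∈ P}) (he : e ∈ (unitDiskGraph P).edgeSet)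
    (ρ : ℝ) (hρ : 1 < ρ) :
    ∃ r : ℕ, 1 ≤ r ∧
      (evdOpt (edgeNbhdIter (unitDiskGraph P).edgeFinset e (r + 4)) : ℝ) ≤
        ρ * (evdOpt (edgeNbhdIter (unitDiskGraph P).edgeFinset e r) : ℝ) := by
  by_contra hcon
  push_neg at hcon
  set E := (unitDiskGraph P).edgeFinset with hE
  have heE : e ∈ E := SimpleGraph.mem_edgeFinset.mpr he
  set M : ℕ := E.card with hM
  have hbound : ∀ r, evdOpt (edgeNbhdIter E e r) ≤ M := fun r =>
    le_trans (evdOpt_le_card _) (Finset.card_le_card (edgeNbhdIter_subset heE r))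
  have hone : ∀ r, 1 ≤ evdOpt (edgeNbhdIter E e r) := fun r =>
    one_le_evdOpt ⟨e, mem_edgeNbhdIter E e r⟩
  have hρ0 : (0:ℝ) ≤ ρ := le_of_lt (lt_trans one_pos hρ)
  have key : ∀ k : ℕ, ρ ^ k ≤ (evdOpt (edgeNbhdIter E e (4 * k + 1)) : ℝ) := by
    intro k
    induction k with
    | zero =>
      simpa using (by exact_mod_cast hone 1 : (1:ℝ) ≤ evdOpt (edgeNbhdIter E e 1))
    | succ k ih =>
      have h1 := hcon (4 * k + 1) (by omega)
      have h2 : ρ ^ (k + 1) ≤ ρ * (evdOpt (edgeNbhdIter E e (4 * k + 1)) : ℝ) := by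
        rw [pow_succ, mul_comm]
        exact mul_le_mul_of_nonneg_left ih hρ0
      have h3 : 4 * (k + 1) + 1 = 4 * k + 1 + 4 := by omega
      rw [h3]
      exact le_of_lt (lt_of_le_of_lt h2 h1)
  obtain ⟨k, hk⟩ := pow_unbounded_of_one_lt (M : ℝ) hρ
  have : (M : ℝ) < M :=
    lt_of_lt_of_le hk (le_trans (key k) (by exact_mod_cast hbound (4 * k + 1)))
  exact lt_irrefl _ this

end EVDS
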